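/- arXiv:1911.06072 — 5 statements merged into one kernel-verified Lean document; each statement's English description precedes it below -/
import Mathlib

section
/- Let $\kappa>0$, $f_{low}\in\mathbb{R}$, $M>0$, and let $(f_k)$, $(g_k)$ be real sequences with $f_k \ge f_{low}$ and $\kappa g_k^2 \le f_k - f_{k+1} + M/(k+1)$ for all $k \ge 0$. Then for any $\epsilon \in (0,1)$ and any integer $T \ge \max\{16M^2/(\kappa^2\epsilon^4),\, 1 + 4M/(\kappa\epsilon^2),\, 2(f_0 - f_{low})/(\kappa\epsilon^2)\}$, one has $\min_{0\le k\le T-1}|g_k| \le \epsilon$. -/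
lemma harm_sqrt_aux (n : ℕ) : ∑ k ∈ Finset.range n, (1 / (k + 1) : ℝ) ≤ 2 * Real.sqrt n := by
  induction n with
  | zero => simp
  | succ n ih =>
    rw [Finset.sum_range_succ]
    have hn1 : (0:ℝ) < (n:ℝ) + 1 := by positivity
    have e1 : Real.sqrt ((n:ℝ)+1) ^ 2 = (n:ℝ)+1 := Real.sq_sqrt (by positivity)
    have e2 : Real.sqrt (n:ℝ) ^ 2 = (n:ℝ) := Real.sq_sqrt (by positivity)
    have h1 : Real.sqrt (n:ℝ) ≤ Real.sqrt ((n:ℝ)+1) := Real.sqrt_le_sqrt (by linarith)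
    have h2 : Real.sqrt ((n:ℝ)+1) ≤ (n:ℝ)+1 := by nlinarith [Real.sqrt_nonneg ((n:ℝ)+1), e1]
    have h0 : 0 ≤ Real.sqrt (n:ℝ) := Real.sqrt_nonneg _
    have key : 1 / ((n:ℝ)+1) ≤ 2 * (Real.sqrt ((n:ℝ)+1) - Real.sqrt (n:ℝ)) := by
      rw [div_le_iff₀ hn1]
      nlinarith
    have : ((n+1 : ℕ) : ℝ) = (n:ℝ) + 1 := by push_cast; ring
    rw [this]
    linarith

theorem complexity_one_over_k (κ flow M : ℝ) (hκ : 0 < κ) (hM : 0 < M)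
    (f g : ℕ → ℝ) (hflow : ∀ k, flow ≤ f k)
    (hdesc : ∀ k, κ * g k ^ 2 ≤ f k - f (k + 1) + M / (k + 1))
    (ε : ℝ) (hε : ε ∈ Set.Ioo (0 : ℝ) 1)
    (T : ℕ) (hT : 0 < T)
    (hTbig : max (16 * M ^ 2 / (κ ^ 2 * ε ^ 4))
        (max (1 + 4 * M / (κ * ε ^ 2)) (2 * (f 0 - flow) / (κ * ε ^ 2)))
        ≤ (T : ℝ)) :
    (Finset.range T).inf' (Finset.nonempty_range_iff.mpr hT.ne')
        (fun k => |g k|) ≤ ε := by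
  by_contra hcon
  push_neg at hcon
  obtain ⟨hε0, hε1⟩ := hε
  have hεg : ∀ k ∈ Finset.range T, κ * ε ^ 2 < κ * g k ^ 2 := by
    intro k hk
    have h := lt_of_lt_of_le hcon (Finset.inf'_le _ hk)
    have : ε ^ 2 < g k ^ 2 := by
      nlinarith [abs_nonneg (g k), sq_abs (g k)]
    nlinarith
  -- sum lower bound
  have hlow : κ * ε ^ 2 * T < ∑ k ∈ Finset.range T, κ * g k ^ 2 := by
    have := Finset.sum_lt_sum_of_nonempty (Finset.nonempty_range_iff.mpr hT.ne') hεg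
    simpa [Finset.sum_const, Finset.card_range, mul_comm] using this
  -- sum upper bound
  have htel : ∑ k ∈ Finset.range T, (f k - f (k+1)) = f 0 - f T :=
    Finset.sum_range_sub' f T
  have hup : ∑ k ∈ Finset.range T, κ * g k ^ 2 ≤ (f 0 - flow) + 2 * M * Real.sqrt T := by
    have h1 : ∑ k ∈ Finset.range T, κ * g k ^ 2
        ≤ ∑ k ∈ Finset.range T, (f k - f (k+1) + M / (k+1)) :=
      Finset.sum_le_sum fun k _ => hdesc k
    rw [Finset.sum_add_distrib, htel] at h1
    have h2 : ∑ k ∈ Finset.range T, (M / (k+1) : ℝ) ≤ 2 * M * Real.sqrt T := by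
      have := harm_sqrt_aux T
      calc ∑ k ∈ Finset.range T, (M / (k+1) : ℝ)
          = M * ∑ k ∈ Finset.range T, (1 / (k+1) : ℝ) := by
            rw [Finset.mul_sum]; congr 1; ext k; ring
        _ ≤ M * (2 * Real.sqrt T) := by
            exact mul_le_mul_of_nonneg_left this hM.le
        _ = 2 * M * Real.sqrt T := by ring
    have := hflow T
    linarith
  -- bounds from hTbig
  have hb1 : 16 * M ^ 2 / (κ ^ 2 * ε ^ 4) ≤ (T:ℝ) := le_trans (le_max_left _ _) hTbig
  have hb3 : 2 * (f 0 - flow) / (κ * ε ^ 2) ≤ (T:ℝ) :=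
    le_trans (le_trans (le_max_right _ _) (le_max_right _ _)) hTbig
  have hκε : (0:ℝ) < κ * ε ^ 2 := by positivity
  have hf0 : f 0 - flow ≤ κ * ε ^ 2 * T / 2 := by
    rw [div_le_iff₀ hκε] at hb3; linarith
  have hT1 : (1:ℝ) ≤ (T:ℝ) := by exact_mod_cast hT
  have hsq : Real.sqrt T ^ 2 = (T:ℝ) := Real.sq_sqrt (by positivity)
  have hsqpos : 0 < Real.sqrt (T:ℝ) := Real.sqrt_pos.mpr (by linarith)
  have hsqT : 4 * M / (κ * ε ^ 2) ≤ Real.sqrt T := by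
    rw [div_le_iff₀ hκε]
    nlinarith [div_le_iff₀ (show (0:ℝ) < κ ^ 2 * ε ^ 4 by positivity) |>.mp hb1]
  have hMT : 2 * M * Real.sqrt T ≤ κ * ε ^ 2 * T / 2 := by
    rw [div_le_iff₀ hκε] at hsqT
    nlinarith
  linarith
end

section
/- Let $\kappa>0$, $f_{low}\in\mathbb{R}$, and let $(f_k)$, $(g_k)$, $(\nu_k)$ be real sequences with $\nu_k \ge 0$, $f_k \ge f_{low}$, and $\kappa g_k^2 \le f_k - f_{k+1} + \nu_k$ for all $k$. Suppose there exists $k_1 \in \mathbb{N}$ such that $\nu_k \le \frac{\kappa}{2} g_k^2$ for all $k \ge k_1$. Then for every $\epsilon > 0$, the set $\{k \in \mathbb{N} : |g_k| > \epsilon\}$ is finite and has cardinality at most $k_1 + \frac{2(f_0 - f_{low} + \sum_{i=0}^{k_1-1}\nu_i)}{\kappa}\epsilon^{-2}$. -/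
theorem card_large_gradient (κ flow : ℝ) (hκ : 0 < κ)
    (f g ν : ℕ → ℝ) (hν : ∀ k, 0 ≤ ν k) (hflow : ∀ k, flow ≤ f k)
    (hdesc : ∀ k, κ * g k ^ 2 ≤ f k - f (k + 1) + ν k)
    (k₁ : ℕ) (hk₁ : ∀ k, k₁ ≤ k → ν k ≤ κ / 2 * g k ^ 2)
    (ε : ℝ) (hε : 0 < ε) :
    {k : ℕ | ε < |g k|}.Finite ∧
      (Nat.card {k : ℕ | ε < |g k|} : ℝ) ≤
        k₁ + 2 * (f 0 - flow + ∑ i ∈ Finset.range k₁, ν i) / κ * ε⁻¹ ^ 2 := by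
  set D : ℝ := f 0 - flow + ∑ i ∈ Finset.range k₁, ν i with hD
  -- f N ≤ f 0 + ∑_{i<N} ν i
  have hA : ∀ N, f N ≤ f 0 + ∑ i ∈ Finset.range N, ν i := by
    intro N
    induction N with
    | zero => simp
    | succ n ih =>
      have h1 : 0 ≤ f n - f (n + 1) + ν n :=
        le_trans (by positivity) (hdesc n)
      rw [Finset.sum_range_succ, ← add_assoc]
      linarith
  -- for k ≥ k₁, κ/2 * g k ^ 2 ≤ f k - f (k+1)
  have hB : ∀ k, k₁ ≤ k → κ / 2 * g k ^ 2 ≤ f k - f (k + 1) := by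
    intro k hk
    have := hdesc k
    have := hk₁ k hk
    nlinarith
  -- partial sums bounded by D
  have hC : ∀ N, ∑ k ∈ Finset.Ico k₁ N, (κ / 2 * g k ^ 2) ≤ D := by
    intro N
    rcases le_or_gt N k₁ with h | h
    · rw [Finset.Ico_eq_empty (by omega)]
      have := hA k₁
      have := hflow k₁
      simp only [Finset.sum_empty]
      rw [hD]; linarith
    · have htel : ∑ k ∈ Finset.Ico k₁ N, (κ / 2 * g k ^ 2) ≤ f k₁ - f N := by
        have : ∀ M, k₁ ≤ M → ∑ k ∈ Finset.Ico k₁ M, (κ / 2 * g k ^ 2) ≤ f k₁ - f M := by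
          intro M hM
          induction M with
          | zero => simp_all
          | succ n ih =>
            rcases Nat.lt_or_ge k₁ (n + 1) with h' | h'
            · have hkn : k₁ ≤ n := by omega
              have := ih hkn
              rw [Finset.sum_Ico_succ_top hkn]
              have := hB n hkn
              linarith
            · have : k₁ = n + 1 := by omega
              subst this
              simp
        exact this N h.le
      have := hA k₁
      have := hflow N
      rw [hD]; linarith
  -- bound on finite subsets of the "tail" bad set
  set S' : Set ℕ := {k | k₁ ≤ k ∧ ε < |g k|} with hS'
  have hT : ∀ T : Finset ℕ, ↑T ⊆ S' → (T.card : ℝ) * (κ / 2 * ε ^ 2) ≤ D := by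
    intro T hTsub
    rcases T.eq_empty_or_nonempty with rfl | hne
    · have := hC k₁
      simpa using le_trans (by simp) this
    · obtain ⟨N, hN⟩ := T.exists_le
      have hsub : T ⊆ Finset.Ico k₁ (N + 1) := by
        intro x hx
        have hx' := hTsub hx
        simp only [hS', Set.mem_setOf_eq] at hx'
        exact Finset.mem_Ico.mpr ⟨hx'.1, Nat.lt_succ_of_le (hN x hx)⟩
      calc (T.card : ℝ) * (κ / 2 * ε ^ 2)
          = ∑ _k ∈ T, (κ / 2 * ε ^ 2) := by rw [Finset.sum_const, nsmul_eq_mul]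
        _ ≤ ∑ k ∈ T, (κ / 2 * g k ^ 2) := by
            apply Finset.sum_le_sum
            intro k hk
            have hk' := hTsub hk
            simp only [hS', Set.mem_setOf_eq] at hk'
            have : ε ^ 2 ≤ g k ^ 2 := by
              have := sq_abs (g k)
              nlinarith [hk'.2, abs_nonneg (g k)]
            nlinarith
        _ ≤ ∑ k ∈ Finset.Ico k₁ (N + 1), (κ / 2 * g k ^ 2) := by
            apply Finset.sum_le_sum_of_subset_of_nonneg hsub
            intro i _ _
            positivity
        _ ≤ D := hC (N + 1)
  have hpos : 0 < κ / 2 * ε ^ 2 := by positivity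
  set B : ℝ := D / (κ / 2 * ε ^ 2) with hBdef
  have hTcard : ∀ T : Finset ℕ, ↑T ⊆ S' → (T.card : ℝ) ≤ B := by
    intro T hTsub
    rw [hBdef, le_div_iff₀ hpos]
    exact hT T hTsub
  -- S' is finite
  have hS'fin : S'.Finite := by
    by_contra hinf
    have hinf' : S'.Infinite := hinf
    obtain ⟨T, hTsub, hTcard'⟩ := hinf'.exists_subset_card_eq (⌈B⌉₊ + 1)
    have := hTcard T hTsub
    rw [hTcard'] at this
    have hle : B ≤ (⌈B⌉₊ : ℝ) := Nat.le_ceil B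
    push_cast at this
    linarith
  set S : Set ℕ := {k : ℕ | ε < |g k|} with hS
  have hSsub : S ⊆ ↑(Finset.range k₁) ∪ S' := by
    intro x hx
    rcases Nat.lt_or_ge x k₁ with h | h
    · left; simpa using h
    · right; exact ⟨h, hx⟩
  have hSfin : S.Finite :=
    Set.Finite.subset (Set.Finite.union (Finset.range k₁).finite_toSet hS'fin) hSsub
  refine ⟨hSfin, ?_⟩
  have hcard : Nat.card S ≤ k₁ + S'.ncard := by
    rw [Nat.card_coe_set_eq]
    calc S.ncard ≤ (↑(Finset.range k₁) ∪ S' : Set ℕ).ncard :=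
          Set.ncard_le_ncard hSsub (Set.Finite.union (Finset.range k₁).finite_toSet hS'fin)
      _ ≤ (↑(Finset.range k₁) : Set ℕ).ncard + S'.ncard := Set.ncard_union_le _ _
      _ = k₁ + S'.ncard := by rw [Set.ncard_coe_finset, Finset.card_range]
  have hS'card : (S'.ncard : ℝ) ≤ B := by
    have := hTcard hS'fin.toFinset (by simp)
    rwa [Set.ncard_eq_toFinset_card S' hS'fin] 
  have hBval : B = 2 * D / κ * ε⁻¹ ^ 2 := by
    rw [hBdef]
    field_simp
  calc (Nat.card S : ℝ) ≤ (k₁ : ℝ) + S'.ncard := by exact_mod_cast hcard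
    _ ≤ (k₁ : ℝ) + B := by linarith
    _ = (k₁ : ℝ) + 2 * D / κ * ε⁻¹ ^ 2 := by rw [hBval]
end

section
/- Let $\kappa>0$, $f_{low}\in\mathbb{R}$, and let $(f_k)$, $(g_k)$, $(\nu_k)$ be real sequences with $\nu_k \ge 0$, $f_k \ge f_{low}$, $\kappa g_k^2 \le f_k - f_{k+1} + \nu_k$ for all $k$, and such that for every $\delta>0$ there exists $N$ with $\nu_k \le \delta g_k^2$ for all $k \ge N$. Then $\lim_{k\to\infty} g_k = 0$. -/
/-!
Past the index `N` from which `ν k ≤ (κ / 2) * g k ^ 2`, the descent inequality gives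
`(κ / 2) * g k ^ 2 ≤ f k - f (k + 1)`. These telescope, and `f` is bounded below, so the
series of the `g k ^ 2` converges; hence `g k ^ 2 → 0` and `g k → 0`.
-/

open Filter Topology

theorem tendsto_zero_of_le_sub_succ {u f : ℕ → ℝ} {b : ℝ} (hu : ∀ k, 0 ≤ u k)
    (hf : ∀ k, u k ≤ f k - f (k + 1)) (hb : ∀ k, b ≤ f k) :
    Tendsto u atTop (𝓝 0) := by
  refine (summable_of_sum_range_le hu (c := f 0 - b) fun n => ?_).tendsto_atTop_zero
  calc ∑ i ∈ Finset.range n, u i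
      ≤ ∑ i ∈ Finset.range n, (f i - f (i + 1)) := Finset.sum_le_sum fun i _ => hf i
    _ = f 0 - f n := Finset.sum_range_sub' f n
    _ ≤ f 0 - b := by linarith [hb n]

theorem tendsto_zero_of_tendsto_sq_zero {α : Type*} {l : Filter α} {g : α → ℝ}
    (h : Tendsto (fun x => g x ^ 2) l (𝓝 0)) : Tendsto g l (𝓝 0) := by
  rw [tendsto_zero_iff_abs_tendsto_zero]
  simpa [Function.comp_def, Real.sqrt_sq_eq_abs] using h.sqrt

theorem lim_grad_zero_general (κ flow : ℝ) (hκ : 0 < κ)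
    (f g ν : ℕ → ℝ) (hflow : ∀ k, flow ≤ f k)
    (hdesc : ∀ k, κ * g k ^ 2 ≤ f k - f (k + 1) + ν k)
    (hlittleo : ∀ δ > (0 : ℝ), ∃ N : ℕ, ∀ k, N ≤ k → ν k ≤ δ * g k ^ 2) :
    Filter.Tendsto g Filter.atTop (nhds 0) := by
  obtain ⟨N, hN⟩ := hlittleo (κ / 2) (half_pos hκ)
  have hdecrease : ∀ k, κ / 2 * g (k + N) ^ 2 ≤ f (k + N) - f (k + 1 + N) := fun k => by
    rw [add_right_comm]
    linarith [hdesc (k + N), hN (k + N) (Nat.le_add_left N k)]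
  have hscaled := tendsto_zero_of_le_sub_succ (fun k => by positivity) hdecrease
    (fun k => hflow (k + N))
  have hsq : Tendsto (fun k => g k ^ 2) atTop (𝓝 0) := by
    rw [← tendsto_add_atTop_iff_nat N]
    convert hscaled.const_mul (2 / κ) using 2 with k
    · field_simp
    · rw [mul_zero]
  exact tendsto_zero_of_tendsto_sq_zero hsq

theorem lim_grad_zero (κ flow : ℝ) (hκ : 0 < κ)
    (f g ν : ℕ → ℝ) (hν : ∀ k, 0 ≤ ν k) (hflow : ∀ k, flow ≤ f k)
    (hdesc : ∀ k, κ * g k ^ 2 ≤ f k - f (k + 1) + ν k)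
    (hlittleo : ∀ δ > (0 : ℝ), ∃ N : ℕ, ∀ k, N ≤ k → ν k ≤ δ * g k ^ 2) :
    Filter.Tendsto g Filter.atTop (nhds 0) :=
  lim_grad_zero_general κ flow hκ f g ν hflow hdesc hlittleo
end

section
/- Let $\kappa>0$, $f_{low}\in\mathbb{R}$, and let $(f_k)$, $(g_k)$, $(\nu_k)$ be real sequences with $\nu_k \ge 0$, $f_k \ge f_{low}$, $\kappa g_k^2 \le f_k - f_{k+1} + \nu_k$ for all $k$, and $\nu_k \to 0$. Then $\liminf_{k\to\infty} |g_k| = 0$. -/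
theorem liminf_grad_zero (κ flow : ℝ) (hκ : 0 < κ)
    (f g ν : ℕ → ℝ) (hν : ∀ k, 0 ≤ ν k) (hflow : ∀ k, flow ≤ f k)
    (hdesc : ∀ k, κ * g k ^ 2 ≤ f k - f (k + 1) + ν k)
    (hν0 : Filter.Tendsto ν Filter.atTop (nhds 0)) :
    Filter.liminf (fun k => |g k|) Filter.atTop = 0 := by
  have key : ∀ ε : ℝ, 0 < ε → ∃ᶠ k in Filter.atTop, |g k| ≤ ε := by
    intro ε hε
    by_contra h
    rw [Filter.not_frequently] at h
    simp only [not_le] at h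
    rw [Filter.eventually_atTop] at h
    obtain ⟨N, hN⟩ := h
    set c : ℝ := κ * ε ^ 2 / 2 with hc
    have hcpos : 0 < c := by positivity
    have hνsmall : ∀ᶠ k in Filter.atTop, ν k ≤ c := by
      have := hν0.eventually_le_const hcpos
      simpa using this
    rw [Filter.eventually_atTop] at hνsmall
    obtain ⟨M, hM⟩ := hνsmall
    set K := max N M with hK
    have hstep : ∀ k, K ≤ k → f (k + 1) ≤ f k - c := by
      intro k hk
      have h1 : ε < |g k| := hN k (le_trans (le_max_left _ _) hk)
      have h2 : ν k ≤ c := hM k (le_trans (le_max_right _ _) hk)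
      have h3 : κ * ε ^ 2 ≤ κ * g k ^ 2 := by
        apply mul_le_mul_of_nonneg_left _ hκ.le
        calc ε ^ 2 ≤ |g k| ^ 2 := by
              apply pow_le_pow_left₀ hε.le h1.le
          _ = g k ^ 2 := sq_abs _
      have := hdesc k
      nlinarith
    have htel : ∀ n : ℕ, f (K + n) ≤ f K - n * c := by
      intro n
      induction n with
      | zero => simp
      | succ n ih =>
        have := hstep (K + n) (Nat.le_add_right _ _)
        push_cast
        calc f (K + (n + 1)) = f (K + n + 1) := by ring_nf
          _ ≤ f (K + n) - c := this
          _ ≤ f K - n * c - c := by linarith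
          _ = f K - (n + 1) * c := by ring
    obtain ⟨n, hn⟩ := exists_nat_gt ((f K - flow) / c)
    have : (f K - flow) / c < n := hn
    have hnc : f K - flow < n * c := by
      rwa [div_lt_iff₀ hcpos] at this
    have := htel n
    have := hflow (K + n)
    linarith
  have hbdd : Filter.IsBoundedUnder (· ≥ ·) Filter.atTop fun k => |g k| :=
    Filter.isBoundedUnder_of ⟨0, fun k => abs_nonneg _⟩
  have hcobdd : Filter.IsCoboundedUnder (· ≥ ·) Filter.atTop fun k => |g k| :=
    Filter.IsCoboundedUnder.of_frequently_le (key 1 one_pos)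
  have hle : ∀ ε : ℝ, 0 < ε → Filter.liminf (fun k => |g k|) Filter.atTop ≤ ε := by
    intro ε hε
    exact Filter.liminf_le_of_frequently_le (key ε hε) hbdd
  have h1 : Filter.liminf (fun k => |g k|) Filter.atTop ≤ 0 := by
    by_contra h
    push_neg at h
    linarith [hle _ (half_pos h)]
  have h2 : 0 ≤ Filter.liminf (fun k => |g k|) Filter.atTop :=
    Filter.le_liminf_of_le hcobdd (Filter.Eventually.of_forall fun k => abs_nonneg _)
  linarith
end

section
/- Let $\alpha_0 > 0$, $\bar\alpha \in (0, \alpha_0]$, $\beta \in (0,1)$, and let $(\alpha_k)_{k\ge 0}$ and $(l_k)_{k \ge 0}$ (with $l_k \in \mathbb{N}$) satisfy $\alpha_{k+1} = \alpha_k \beta^{l_k - 1}$ and $\alpha_k \ge \bar\alpha$ for all $k$. Then the total number of function evaluations $N_k = \sum_{j=0}^{k}(l_j + 1)$ satisfies $N_k \le 2(k+1) + \frac{\log\bar\alpha - \log\alpha_0}{\log\beta}$. -/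
theorem eval_count_bound (α₀ ᾱ β : ℝ) (hα₀ : 0 < α₀) (hᾱ : ᾱ ∈ Set.Ioc 0 α₀)
    (hβ : β ∈ Set.Ioo (0 : ℝ) 1)
    (α : ℕ → ℝ) (l : ℕ → ℕ) (hinit : α 0 = α₀)
    (hrec : ∀ k, α (k + 1) = α k * β ^ ((l k : ℝ) - 1))
    (hlow : ∀ k, ᾱ ≤ α k) (k : ℕ) :
    ((∑ j ∈ Finset.range (k + 1), (l j + 1) : ℕ) : ℝ) ≤
      2 * (k + 1) + (Real.log ᾱ - Real.log α₀) / Real.log β := by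
  obtain ⟨hᾱ0, hᾱα₀⟩ := hᾱ
  obtain ⟨hβ0, hβ1⟩ := hβ
  have hαpos : ∀ n, 0 < α n := fun n => lt_of_lt_of_le hᾱ0 (hlow n)
  have hlogβ : Real.log β < 0 := Real.log_neg hβ0 hβ1
  have key : ∀ n, Real.log (α n) =
      Real.log α₀ + (∑ j ∈ Finset.range n, ((l j : ℝ) - 1)) * Real.log β := by
    intro n
    induction n with
    | zero => simp [hinit]
    | succ m ih =>
      rw [hrec m, Real.log_mul (hαpos m).ne' (by positivity),
        Real.log_rpow hβ0, ih, Finset.sum_range_succ]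
      ring
  have h1 : Real.log ᾱ ≤ Real.log (α (k + 1)) :=
    Real.log_le_log hᾱ0 (hlow (k + 1))
  rw [key (k + 1)] at h1
  set S : ℝ := ∑ j ∈ Finset.range (k + 1), ((l j : ℝ) - 1) with hS
  have h2 : S ≤ (Real.log ᾱ - Real.log α₀) / Real.log β := by
    rw [le_div_iff_of_neg hlogβ]
    linarith
  have h3 : ((∑ j ∈ Finset.range (k + 1), (l j + 1) : ℕ) : ℝ)
      = S + 2 * (k + 1) := by
    push_cast
    rw [Finset.sum_add_distrib, hS, Finset.sum_sub_distrib]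
    simp
    ring
  linarith
end
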